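/- arXiv:1609.05950 — 3 statements merged into one kernel-verified Lean document; each statement's English description precedes it below -/
import Mathlib

section
/- Let g ≥ 2 be an integer. There is a constant C (depending only on g) such that P_g(N) ≤ C·g^N/N for all N ≥ 2. -/
/-- `varpi g D N` counts the integers `1 ≤ n ≤ N` for which
`u_{D,g}(n) = ∑_{i=0}^{n-1} d_i g^i` is prime. -/
def varpi (g : ℕ) (D : ℕ → ℕ) (N : ℕ) : ℕ :=
  ((Finset.Icc 1 N).filter fun n => Nat.Prime (∑ i ∈ Finset.range n, D i * g ^ i)).card

/-- Extension of a finite digit tuple to a sequence of digits (zero beyond the tuple). -/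
def digitExt {N g : ℕ} (d : Fin N → Fin g) : ℕ → ℕ :=
  fun i => if h : i < N then (d ⟨i, h⟩ : ℕ) else 0

/-- `Pcount g N` is the number of digit tuples `(d_0, …, d_{N-1}) ∈ {0,…,g-1}^N`
with `d_{N-1} ≠ 0` such that `ϖ_{D,g}(N) = N - η`, where `η = 1` if `g = 2`
and `η = 0` otherwise. -/
noncomputable def Pcount (g N : ℕ) : ℕ :=
  Nat.card {d : Fin N → Fin g //
    digitExt d (N - 1) ≠ 0 ∧ varpi g (digitExt d) N = N - (if g = 2 then 1 else 0)}

/-! If `ϖ(N) ≥ N - 1`, then `u(N)` or `u(N-1)` is prime. A digit tuple is determined by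
`u(N) < g^N`, and `u(N-1) = u(N) mod g^(N-1)`, so the admissible tuples inject into the
`n < g^N` for which `n` or `n mod g^(N-1)` is prime. There are at most
`π(g^N) + g π(g^(N-1))` of these, and Chebyshev's bound `π(x) ≪ x / log x` at `x = g^N`
gives `g^N / N`. -/

open Finset

section Digits

variable {g : ℕ}

lemma sum_range_mul_pow_lt {D : ℕ → ℕ} {n : ℕ} (hD : ∀ i < n, D i < g) :
    ∑ i ∈ range n, D i * g ^ i < g ^ n := by
  induction n with
  | zero => simp
  | succ n ih =>
    have hlow := ih fun i hi => hD i (by omega)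
    have htop : D n + 1 ≤ g := hD n (by omega)
    calc ∑ i ∈ range (n + 1), D i * g ^ i
        = ∑ i ∈ range n, D i * g ^ i + D n * g ^ n := sum_range_succ _ _
      _ < (D n + 1) * g ^ n := by linarith
      _ ≤ g ^ (n + 1) := by rw [pow_succ']; gcongr

lemma sum_range_mul_pow_mod {D : ℕ → ℕ} {m n : ℕ} (hD : ∀ i < m, D i < g)
    (hmn : m ≤ n) :
    (∑ i ∈ range n, D i * g ^ i) % g ^ m = ∑ i ∈ range m, D i * g ^ i := by
  obtain ⟨k, rfl⟩ := Nat.exists_eq_add_of_le hmn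
  have high : ∑ i ∈ range k, D (m + i) * g ^ (m + i) =
      g ^ m * ∑ i ∈ range k, D (m + i) * g ^ i := by
    rw [mul_sum]; exact sum_congr rfl fun i _ => by ring
  rw [sum_range_add, high, Nat.add_mul_mod_self_left,
    Nat.mod_eq_of_lt (sum_range_mul_pow_lt hD)]

lemma digitExt_lt (hg : 0 < g) {N : ℕ} (d : Fin N → Fin g) (i : ℕ) : digitExt d i < g := by
  unfold digitExt
  split
  · exact (d _).2
  · exact hg

lemma sum_range_digitExt {N : ℕ} (d : Fin N → Fin g) :
    ∑ i ∈ range N, digitExt d i * g ^ i = finFunctionFinEquiv d := by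
  rw [finFunctionFinEquiv_apply, sum_range]
  simp [digitExt]

end Digits

lemma prime_or_prime_of_sub_one_le_varpi {g N : ℕ} {D : ℕ → ℕ} (hN : 2 ≤ N)
    (h : N - 1 ≤ varpi g D N) :
    (∑ i ∈ range N, D i * g ^ i).Prime ∨ (∑ i ∈ range (N - 1), D i * g ^ i).Prime := by
  by_contra! hnot
  have hsub : {n ∈ Icc 1 N | (∑ i ∈ range n, D i * g ^ i).Prime} ⊆ Icc 1 (N - 2) := by
    intro n hn
    simp only [mem_filter, mem_Icc] at hn ⊢
    have hN' : n ≠ N := by rintro rfl; exact hnot.1 hn.2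
    have hN1 : n ≠ N - 1 := by rintro rfl; exact hnot.2 hn.2
    omega
  have := card_le_card hsub
  rw [Nat.card_Icc] at this
  unfold varpi at h
  omega

lemma card_filter_prime_mod_le (k m : ℕ) :
    #{n ∈ range (k * m) | (n % m).Prime} ≤ k * Nat.primeCounting' m := by
  have hsub : {n ∈ range (k * m) | (n % m).Prime} ⊆
      (range k ×ˢ m.primesBelow).image fun ap => ap.2 + ap.1 * m := by
    intro n hn
    simp only [mem_filter, mem_range] at hn
    have hm : 0 < m := Nat.pos_of_ne_zero (by rintro rfl; simp at hn)
    refine mem_image.mpr ⟨(n / m, n % m), ?_, by simp [Nat.mod_add_div']⟩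
    simp only [mem_product, mem_range, Nat.mem_primesBelow]
    exact ⟨Nat.div_lt_of_lt_mul (by linarith [hn.1]), Nat.mod_lt n hm, hn.2⟩
  calc _ ≤ _ := card_le_card hsub
    _ ≤ #(range k ×ˢ m.primesBelow) := card_image_le
    _ = k * Nat.primeCounting' m := by
      rw [card_product, card_range, Nat.primesBelow_card_eq_primeCounting']

lemma Pcount_le_card_filter {g N : ℕ} (hg : 0 < g) (hN : 2 ≤ N) :
    Pcount g N ≤ #{n ∈ range (g ^ N) | n.Prime ∨ (n % g ^ (N - 1)).Prime} := by
  classical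
  rw [Pcount, Nat.card_eq_fintype_card, Fintype.card_subtype]
  refine card_le_card_of_injOn (fun d => (finFunctionFinEquiv d : ℕ)) ?_
    fun a _ b _ hab => finFunctionFinEquiv.injective (Fin.ext hab)
  intro d hd
  obtain ⟨-, hvarpi⟩ : _ ∧ varpi g (digitExt d) N = _ := by simpa using hd
  have hprime := prime_or_prime_of_sub_one_le_varpi (g := g) (D := digitExt d) hN
    (by split_ifs at hvarpi <;> omega)
  rw [← sum_range_mul_pow_mod (fun i _ => digitExt_lt hg d i) (Nat.sub_le N 1),
    sum_range_digitExt] at hprime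
  simpa [coe_filter] using ⟨(finFunctionFinEquiv d).2, hprime⟩

lemma Pcount_le {g N : ℕ} (hg : 0 < g) (hN : 2 ≤ N) :
    Pcount g N ≤ (g + 1) * Nat.primeCounting (g ^ N) := by
  have hsplit : g ^ N = g * g ^ (N - 1) := by rw [← pow_succ']; congr 1; omega
  have h1 : Nat.primeCounting' (g ^ N) ≤ Nat.primeCounting (g ^ N) :=
    Nat.monotone_primeCounting' (Nat.le_succ _)
  have h2 : Nat.primeCounting' (g ^ (N - 1)) ≤ Nat.primeCounting' (g ^ N) :=
    Nat.monotone_primeCounting' (Nat.pow_le_pow_right hg (Nat.sub_le N 1))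
  calc Pcount g N ≤ #{n ∈ range (g ^ N) | n.Prime}
        + #{n ∈ range (g ^ N) | (n % g ^ (N - 1)).Prime} := by
        grw [Pcount_le_card_filter hg hN, filter_or, card_union_le]
    _ ≤ Nat.primeCounting' (g ^ N) + g * Nat.primeCounting' (g ^ (N - 1)) := by
        rw [← Nat.primesBelow_card_eq_primeCounting', Nat.primesBelow, hsplit]
        gcongr
        exact card_filter_prime_mod_le g _
    _ ≤ (g + 1) * Nat.primeCounting (g ^ N) := by nlinarith

lemma primeCounting_floor_le {x : ℝ} (hx : 1 < x) :
    (Nat.primeCounting ⌊x⌋₊ : ℝ) ≤ (2 * Real.log 4 + 2) * x / Real.log x := by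
  have hlog : 0 < Real.log x := Real.log_pos hx
  have hsqrt : Real.log x ≤ 2 * √x := by
    have := Real.log_le_sub_one_of_pos (Real.sqrt_pos.mpr (by linarith : 0 < x))
    rw [Real.log_sqrt (by linarith)] at this
    linarith
  have hsx : √x * √x = x := Real.mul_self_sqrt (by linarith)
  have key := Chebyshev.pi_le_log4_mul_div hx
  rw [Real.log_sqrt (by linarith)] at key
  rw [le_div_iff₀ hlog]
  calc (Nat.primeCounting ⌊x⌋₊ : ℝ) * Real.log x
      ≤ (Real.log 4 * x / (Real.log x / 2) + √x) * Real.log x := by gcongr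
    _ = 2 * Real.log 4 * x + √x * Real.log x := by field_simp
    _ ≤ 2 * Real.log 4 * x + √x * (2 * √x) := by gcongr
    _ = (2 * Real.log 4 + 2) * x := by rw [mul_left_comm, hsx]; ring

theorem stmt_1 (g : ℕ) (hg : 2 ≤ g) :
    ∃ C : ℝ, ∀ N : ℕ, 2 ≤ N → (Pcount g N : ℝ) ≤ C * (g : ℝ) ^ N / N := by
  have hlog : 0 < Real.log g := Real.log_pos (by exact_mod_cast hg)
  refine ⟨(g + 1) * (2 * Real.log 4 + 2) / Real.log g, fun N hN => ?_⟩
  have hx : (1 : ℝ) < (g : ℝ) ^ N := one_lt_pow₀ (by exact_mod_cast hg) (by omega)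
  have hπ := primeCounting_floor_le hx
  rw [← Nat.cast_pow, Nat.floor_natCast, Nat.cast_pow, Real.log_pow] at hπ
  have hN0 : (0 : ℝ) < N := by exact_mod_cast (by omega : 0 < N)
  calc (Pcount g N : ℝ) ≤ (g + 1) * Nat.primeCounting (g ^ N) := by
        exact_mod_cast Pcount_le (by omega) hN
    _ ≤ (g + 1) * ((2 * Real.log 4 + 2) * g ^ N / (N * Real.log g)) := by gcongr
    _ = _ := by field_simp
end

section
/- There is a constant C such that P_2(N) ≤ C · 5^{N/3} for all N ≥ 1; that is, the number of binary digit tuples (d_0,…,d_{N−1}) ∈ {0,1}^N with d_{N−1} = 1 for which u_{D,2}(n) = ∑_{i=0}^{n−1} d_i 2^i is prime for all but exactly one value of n with 1 ≤ n ≤ N is at most C·(5^{1/3})^N. -/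
namespace Stmt5aux

def idx (a b c : Fin 2) : Fin 8 := ⟨a + 2*b + 4*c, by omega⟩

lemma abstract : ∀ (f : Fin 8 → Bool) (c0 : Fin 3) (k0 : Fin 8),
    (∀ k : Fin 8, ((k:ℕ) % 3 = (c0:ℕ) → f k = true → k = k0) ∧ ((k:ℕ) < (k0:ℕ) → f k = false)) →
    (Finset.univ.filter fun x : Fin 2 × Fin 2 × Fin 2 =>
      f (idx x.1 0 0) = true ∧ f (idx x.1 x.2.1 0) = true ∧ f (idx x.1 x.2.1 x.2.2) = true).card ≤ 5 := by
  set_option maxRecDepth 10000 in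
  decide

lemma fiber (v p : ℕ) (hp : 1 ≤ p) :
    (Finset.univ.filter fun x : Fin 2 × Fin 2 × Fin 2 =>
      Nat.Prime (v + x.1 * 2^p) ∧ Nat.Prime (v + x.1 * 2^p + x.2.1 * 2^(p+1)) ∧
      Nat.Prime (v + x.1 * 2^p + x.2.1 * 2^(p+1) + x.2.2 * 2^(p+2))).card ≤ 5 := by
  have hq2 : 2 ≤ 2^p := by
    calc 2 = 2^1 := (pow_one 2).symm
    _ ≤ 2^p := Nat.pow_le_pow_right (by norm_num) hp
  have h3 : 2^p % 3 = 1 ∨ 2^p % 3 = 2 := by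
    have hnd : ¬ 3 ∣ 2^p := by
      intro h
      have := Nat.Prime.dvd_of_dvd_pow (p := 3) (n := p) Nat.prime_three h
      omega
    omega
  obtain ⟨c0, hc0lt, hc0⟩ : ∃ c0, c0 < 3 ∧ ∀ k : ℕ, ((v + k * 2^p) % 3 = 0 ↔ k % 3 = c0) := by
    rcases h3 with h | h
    · exact ⟨(3 - v % 3) % 3, by omega, fun k => by rw [Nat.add_mod, Nat.mul_mod, h]; omega⟩
    · exact ⟨v % 3, by omega, fun k => by rw [Nat.add_mod, Nat.mul_mod, h]; omega⟩
  set f : Fin 8 → Bool := fun k => decide (Nat.Prime (v + (k:ℕ) * 2^p)) with hf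
  have hfiff : ∀ k : Fin 8, f k = true ↔ Nat.Prime (v + (k:ℕ) * 2^p) := by
    intro k; simp [hf]
  have key : ∀ k0 : Fin 8, (∀ k : Fin 8, ((k:ℕ) % 3 = c0 → f k = true → k = k0) ∧
      ((k:ℕ) < (k0:ℕ) → f k = false)) →
      (Finset.univ.filter fun x : Fin 2 × Fin 2 × Fin 2 =>
      Nat.Prime (v + x.1 * 2^p) ∧ Nat.Prime (v + x.1 * 2^p + x.2.1 * 2^(p+1)) ∧
      Nat.Prime (v + x.1 * 2^p + x.2.1 * 2^(p+1) + x.2.2 * 2^(p+2))).card ≤ 5 := by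
    intro k0 hk0
    have habs := abstract f ⟨c0, hc0lt⟩ k0 hk0
    refine le_trans (le_of_eq ?_) habs
    congr 1
    apply Finset.filter_congr
    intro x _
    have e1 : ((idx x.1 0 0 : Fin 8) : ℕ) = (x.1 : ℕ) := by simp [idx]
    have e2 : ((idx x.1 x.2.1 0 : Fin 8) : ℕ) = (x.1 : ℕ) + 2 * (x.2.1 : ℕ) := by simp [idx]
    have e3 : ((idx x.1 x.2.1 x.2.2 : Fin 8) : ℕ) = (x.1 : ℕ) + 2 * (x.2.1 : ℕ) + 4 * (x.2.2 : ℕ) := rfl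
    rw [hfiff, hfiff, hfiff, e1, e2, e3]
    constructor
    · rintro ⟨h1, h2, h3⟩
      refine ⟨h1, ?_, ?_⟩ <;> [convert h2 using 1; convert h3 using 1] <;> ring
    · rintro ⟨h1, h2, h3⟩
      refine ⟨h1, ?_, ?_⟩ <;> [convert h2 using 1; convert h3 using 1] <;> ring
  by_cases hex : ∃ k : Fin 8, (k:ℕ) % 3 = c0 ∧ Nat.Prime (v + (k:ℕ) * 2^p)
  · obtain ⟨k0, hk0c, hk0p⟩ := hex
    have heq3 : v + (k0:ℕ) * 2^p = 3 := by
      have hd : 3 ∣ v + (k0:ℕ) * 2^p := Nat.dvd_of_mod_eq_zero ((hc0 _).2 hk0c)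
      rcases hk0p.eq_one_or_self_of_dvd 3 hd with h | h <;> omega
    refine key k0 fun k => ⟨fun hkc hkf => ?_, fun hlt => ?_⟩
    · have hkp : Nat.Prime (v + (k:ℕ) * 2^p) := (hfiff k).1 hkf
      have heqk : v + (k:ℕ) * 2^p = 3 := by
        have hd : 3 ∣ v + (k:ℕ) * 2^p := Nat.dvd_of_mod_eq_zero ((hc0 _).2 hkc)
        rcases hkp.eq_one_or_self_of_dvd 3 hd with h | h <;> omega
      have hmul : (k:ℕ) * 2^p = (k0:ℕ) * 2^p := by omega
      exact Fin.ext (Nat.eq_of_mul_eq_mul_right (by positivity) hmul)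
    · have hle : ((k:ℕ) + 1) * 2^p ≤ (k0:ℕ) * 2^p := Nat.mul_le_mul_right _ (by omega)
      have hsmall : v + (k:ℕ) * 2^p + 2 ≤ 3 := by
        have h' : v + ((k:ℕ) + 1) * 2^p ≤ 3 := by omega
        nlinarith [hq2]
      have hnp : ¬ Nat.Prime (v + (k:ℕ) * 2^p) := fun hp' => by have := hp'.two_le; omega
      simpa [hf] using hnp
  · refine key 0 fun k => ⟨fun hkc hkf => absurd ⟨k, hkc, (hfiff k).1 hkf⟩ hex, fun hlt => ?_⟩
    simp at hlt

open Classical in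
noncomputable def Bset (N : ℕ) : Finset (Fin N → Fin 2) :=
  Finset.univ.filter fun d =>
    ∀ n, 2 ≤ n → n ≤ N → Nat.Prime (∑ i ∈ Finset.range n, digitExt d i * 2 ^ i)

lemma digitExt_eq {N : ℕ} (d : Fin N → Fin 2) {i : ℕ} (h : i < N) :
    digitExt d i = (d ⟨i, h⟩ : ℕ) := dif_pos h

def res (M : ℕ) (d : Fin (M+3) → Fin 2) : Fin M → Fin 2 := fun i => d ⟨i, by omega⟩

lemma sum_res (M : ℕ) (d : Fin (M+3) → Fin 2) {n : ℕ} (hn : n ≤ M) :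
    ∑ i ∈ Finset.range n, digitExt (res M d) i * 2 ^ i
      = ∑ i ∈ Finset.range n, digitExt d i * 2 ^ i := by
  refine Finset.sum_congr rfl fun i hi => ?_
  have hiM : i < M := lt_of_lt_of_le (Finset.mem_range.1 hi) hn
  rw [digitExt_eq _ hiM, digitExt_eq _ (show i < M+3 by omega)]
  rfl

set_option maxHeartbeats 2000000 in
lemma rec_step (M : ℕ) (hM : 1 ≤ M) : (Bset (M+3)).card ≤ 5 * (Bset M).card := by
  classical
  have h1 : (Bset (M+3)).card ≤ 5 * ((Bset (M+3)).image (res M)).card := by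
    apply Finset.card_le_mul_card_image
    intro e he
    set v : ℕ := ∑ i ∈ Finset.range M, digitExt e i * 2 ^ i with hv
    have hmap : ∀ d ∈ (Bset (M+3)).filter fun d => res M d = e,
        ((d ⟨M, by omega⟩, d ⟨M+1, by omega⟩, d ⟨M+2, by omega⟩) : Fin 2 × Fin 2 × Fin 2) ∈
        (Finset.univ.filter fun x : Fin 2 × Fin 2 × Fin 2 =>
          Nat.Prime (v + x.1 * 2^M) ∧ Nat.Prime (v + x.1 * 2^M + x.2.1 * 2^(M+1)) ∧
          Nat.Prime (v + x.1 * 2^M + x.2.1 * 2^(M+1) + x.2.2 * 2^(M+2))) := by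
      intro d hd
      rw [Finset.mem_filter] at hd
      obtain ⟨hdB, hde⟩ := hd
      rw [Bset, Finset.mem_filter] at hdB
      have hprime := hdB.2
      have hvd : ∑ i ∈ Finset.range M, digitExt d i * 2 ^ i = v := by
        rw [hv, ← hde, sum_res M d le_rfl]
      have e1 : ∑ i ∈ Finset.range (M+1), digitExt d i * 2^i
          = v + (d ⟨M, by omega⟩ : ℕ) * 2^M := by
        rw [Finset.sum_range_succ, hvd, digitExt_eq _ (show M < M+3 by omega)]
      have e2 : ∑ i ∈ Finset.range (M+2), digitExt d i * 2^i
          = v + (d ⟨M, by omega⟩ : ℕ) * 2^M + (d ⟨M+1, by omega⟩ : ℕ) * 2^(M+1) := by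
        rw [Finset.sum_range_succ, e1, digitExt_eq _ (show M+1 < M+3 by omega)]
      have e3 : ∑ i ∈ Finset.range (M+3), digitExt d i * 2^i
          = v + (d ⟨M, by omega⟩ : ℕ) * 2^M + (d ⟨M+1, by omega⟩ : ℕ) * 2^(M+1)
            + (d ⟨M+2, by omega⟩ : ℕ) * 2^(M+2) := by
        rw [Finset.sum_range_succ, e2, digitExt_eq _ (show M+2 < M+3 by omega)]
      rw [Finset.mem_filter]
      refine ⟨Finset.mem_univ _, ?_, ?_, ?_⟩
      · rw [← e1]; exact hprime (M+1) (by omega) (by omega)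
      · rw [← e2]; exact hprime (M+2) (by omega) (by omega)
      · rw [← e3]; exact hprime (M+3) (by omega) (by omega)
    have hinj : Set.InjOn
        (fun d : Fin (M+3) → Fin 2 =>
          ((d ⟨M, by omega⟩, d ⟨M+1, by omega⟩, d ⟨M+2, by omega⟩) : Fin 2 × Fin 2 × Fin 2))
        ((Bset (M+3)).filter fun d => res M d = e) := by
      intro d1 h1 d2 h2 heq
      rw [Finset.mem_coe, Finset.mem_filter] at h1 h2
      have hres : res M d1 = res M d2 := by rw [h1.2, h2.2]
      funext i
      obtain ⟨iv, hiv⟩ := i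
      by_cases hiM : iv < M
      · exact congrFun hres ⟨iv, hiM⟩
      · have hcase : iv = M ∨ iv = M+1 ∨ iv = M+2 := by omega
        have heq1 := congrArg Prod.fst heq
        have heq2 := congrArg (fun x => x.2.1) heq
        have heq3 := congrArg (fun x => x.2.2) heq
        rcases hcase with h | h | h <;> subst h
        · exact heq1
        · exact heq2
        · exact heq3
    calc ((Bset (M+3)).filter fun d => res M d = e).card
        ≤ (Finset.univ.filter fun x : Fin 2 × Fin 2 × Fin 2 =>
          Nat.Prime (v + x.1 * 2^M) ∧ Nat.Prime (v + x.1 * 2^M + x.2.1 * 2^(M+1)) ∧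
          Nat.Prime (v + x.1 * 2^M + x.2.1 * 2^(M+1) + x.2.2 * 2^(M+2))).card :=
        Finset.card_le_card_of_injOn _ hmap hinj
      _ ≤ 5 := fiber v M hM
  have h2 : ((Bset (M+3)).image (res M)) ⊆ Bset M := by
    intro e he
    rw [Finset.mem_image] at he
    obtain ⟨d, hd, rfl⟩ := he
    rw [Bset, Finset.mem_filter] at hd ⊢
    refine ⟨Finset.mem_univ _, fun n h2n hnM => ?_⟩
    rw [sum_res M d hnM]
    exact hd.2 n h2n (by omega)
  exact le_trans h1 (Nat.mul_le_mul_left 5 (Finset.card_le_card h2))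

lemma card_le_pow (N : ℕ) : (Bset N).card ≤ 2^N := by
  classical
  calc (Bset N).card ≤ (Finset.univ : Finset (Fin N → Fin 2)).card := by
        rw [Bset]; exact Finset.card_filter_le _ _
    _ = 2^N := by simp [Finset.card_univ]

lemma growth : ∀ N : ℕ, ((Bset N).card : ℝ) ≤ 8 * (5:ℝ) ^ ((N:ℝ)/3) := by
  intro N
  induction N using Nat.strong_induction_on with
  | _ N ih =>
    have h5one : (1:ℝ) ≤ (5:ℝ) ^ ((N:ℝ)/3) :=
      Real.one_le_rpow (by norm_num) (by positivity)
    by_cases hN : N ≤ 3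
    · have h8 : (Bset N).card ≤ 8 := by
        refine le_trans (card_le_pow N) ?_
        calc 2^N ≤ 2^3 := Nat.pow_le_pow_right (by norm_num) hN
          _ = 8 := rfl
      calc ((Bset N).card : ℝ) ≤ 8 := by exact_mod_cast h8
        _ = 8 * 1 := by ring
        _ ≤ 8 * (5:ℝ)^((N:ℝ)/3) := by nlinarith
    · obtain ⟨M, rfl⟩ : ∃ M, N = M + 3 := ⟨N - 3, by omega⟩
      have hM : 1 ≤ M := by omega
      have ihM := ih M (by omega)
      have hstep : ((Bset (M+3)).card : ℝ) ≤ 5 * ((Bset M).card : ℝ) := by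
        exact_mod_cast rec_step M hM
      have hpow : (5:ℝ) ^ ((↑(M+3):ℝ)/3) = 5 * (5:ℝ)^((M:ℝ)/3) := by
        have hdiv : ((↑(M+3):ℝ))/3 = (M:ℝ)/3 + 1 := by push_cast; ring
        rw [hdiv, Real.rpow_add (by norm_num), Real.rpow_one]; ring
      calc ((Bset (M+3)).card : ℝ) ≤ 5 * ((Bset M).card : ℝ) := hstep
        _ ≤ 5 * (8 * (5:ℝ)^((M:ℝ)/3)) := by nlinarith [ihM]
        _ = 8 * (5 * (5:ℝ)^((M:ℝ)/3)) := by ring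
        _ = 8 * (5:ℝ)^((↑(M+3):ℝ)/3) := by rw [hpow]

lemma pcount_le (N : ℕ) (hN : 1 ≤ N) : Pcount 2 N ≤ (Bset N).card := by
  classical
  rw [Pcount, Nat.card_eq_fintype_card, Fintype.card_subtype]
  apply Finset.card_le_card
  intro d hd
  rw [Finset.mem_filter] at hd
  obtain ⟨-, hne, hvar⟩ := hd
  rw [Bset, Finset.mem_filter]
  refine ⟨Finset.mem_univ _, fun n h2 hnN => ?_⟩
  rw [varpi] at hvar
  norm_num at hvar
  set S := (Finset.Icc 1 N).filter
    (fun n => Nat.Prime (∑ i ∈ Finset.range n, digitExt d i * 2 ^ i)) with hS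
  have h1S : (1:ℕ) ∉ S := by
    intro h1
    rw [hS, Finset.mem_filter] at h1
    have hp := h1.2
    rw [Finset.sum_range_one] at hp
    have hle1 : digitExt d 0 ≤ 1 := by
      rw [digitExt]
      split
      · exact Nat.lt_succ_iff.mp (Fin.is_lt _)
      · omega
    have h2le := hp.two_le
    simp only [pow_zero, mul_one] at h2le
    omega
  have hsub : S ⊆ Finset.Icc 2 N := by
    intro m hm
    have hm1 := (Finset.mem_filter.1 hm).1
    rw [Finset.mem_Icc] at hm1 ⊢
    refine ⟨?_, hm1.2⟩
    by_contra hlt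
    have hmeq : m = 1 := by omega
    exact h1S (hmeq ▸ hm)
  have hcard2 : (Finset.Icc 2 N).card = N - 1 := by rw [Nat.card_Icc]; omega
  have hSeq : S = Finset.Icc 2 N :=
    Finset.eq_of_subset_of_card_le hsub (by rw [hcard2, hvar])
  have hnS : n ∈ S := hSeq ▸ Finset.mem_Icc.2 ⟨h2, hnN⟩
  exact (Finset.mem_filter.1 hnS).2

end Stmt5aux

theorem stmt_5 :
    ∃ C : ℝ, ∀ N : ℕ, 1 ≤ N → (Pcount 2 N : ℝ) ≤ C * (5 : ℝ) ^ ((N : ℝ) / 3) := by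
  refine ⟨8, fun N hN => ?_⟩
  calc (Pcount 2 N : ℝ) ≤ ((Stmt5aux.Bset N).card : ℝ) := by
        exact_mod_cast Stmt5aux.pcount_le N hN
    _ ≤ 8 * (5:ℝ) ^ ((N:ℝ)/3) := Stmt5aux.growth N
end

section
/- Let g ≥ 2 be an integer and ω(k) the number of distinct prime divisors of k. There is a constant c > 0 (depending only on g) such that for all sufficiently large N, ω(∏_{p prime, g^{N−1} ≤ p ≤ g^N−1} p_g*) ≥ c·N²/(log N)². -/
/-!
Primes `p` with `g ^ (N - 1) ≤ p < g ^ N` are not divisible by `g`, so `mirror g` is injective on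
them and their mirrors are distinct integers below `X = g ^ N` whose prime factors all lie in the
set `S` of prime factors of the product. By Rankin's trick and the Euler product, any set `T` of
such integers has `#T ≤ √X · ∑ x^(-1/2) ≤ √X · ∏_{q ∈ S} (1 - q^(-1/2))⁻¹ ≤ √X · exp (8 √#S)`.
On the other hand, Erdős's argument for Bertrand's postulate gives at least `n^(2/3)` primes in
`(n, 2n]`, an interval inside `[g ^ (N - 1), g ^ N)` when `n = g ^ (N - 1)`. Comparing logarithms,
`(N/6 - 2/3) log g ≤ 8 √#S`, so `#S ≫ N²`, which is more than claimed.
-/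

/-- The mirror reflection of `s` in base `g`: the integer whose `g`-ary digit
string is the reverse of that of `s`. -/
def mirror (g s : ℕ) : ℕ := Nat.ofDigits g ((Nat.digits g s).reverse)

open Finset Real

section Mirror

variable {g s : ℕ}

lemma digits_mirror (hg : 2 ≤ g) (hs : ¬ g ∣ s) :
    Nat.digits g (mirror g s) = (Nat.digits g s).reverse := by
  have hs0 : s ≠ 0 := by rintro rfl; exact hs (dvd_zero g)
  refine Nat.digits_ofDigits g hg _ (fun d hd ↦ Nat.digits_lt_base hg (List.mem_reverse.mp hd))
    fun _ h ↦ hs (Nat.dvd_of_mod_eq_zero ?_)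
  simpa [List.getLast_reverse, Nat.digits_def' (by omega : 1 < g) (Nat.pos_of_ne_zero hs0)]
    using h

lemma mirror_mirror (hg : 2 ≤ g) (hs : ¬ g ∣ s) : mirror g (mirror g s) = s := by
  rw [mirror, digits_mirror hg hs, List.reverse_reverse, Nat.ofDigits_digits]

lemma mirror_injOn (hg : 2 ≤ g) : Set.InjOn (mirror g) {s | ¬ g ∣ s} := fun a ha b hb hab ↦ by
  rw [← mirror_mirror hg ha, hab, mirror_mirror hg hb]

lemma mirror_ne_zero (hg : 2 ≤ g) (hs : ¬ g ∣ s) : mirror g s ≠ 0 := fun h ↦ by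
  have : mirror g 0 = s := h ▸ mirror_mirror hg hs
  simp only [mirror, Nat.digits_zero, List.reverse_nil, Nat.ofDigits_nil] at this
  exact hs (this ▸ dvd_zero g)

lemma mirror_lt_pow {N : ℕ} (hg : 2 ≤ g) (hs : s < g ^ N) : mirror g s < g ^ N :=
  calc mirror g s < g ^ (Nat.digits g s).reverse.length :=
        Nat.ofDigits_lt_base_pow_length (by omega)
          fun d hd ↦ Nat.digits_lt_base hg (List.mem_reverse.mp hd)
    _ ≤ g ^ N := by
        rw [List.length_reverse]
        exact Nat.pow_le_pow_right (by omega) ((Nat.digits_length_le_iff (by omega) s).mpr hs)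

end Mirror

noncomputable def invSqrtHom : ℕ →* ℝ where
  toFun n := (√n)⁻¹
  map_one' := by simp
  map_mul' m n := by push_cast; rw [Real.sqrt_mul (Nat.cast_nonneg m), mul_inv]

lemma sum_inv_sqrt_le_prod_of_subset_factoredNumbers {S T : Finset ℕ}
    (hT : ↑T ⊆ Nat.factoredNumbers S) :
    ∑ x ∈ T, (√x)⁻¹ ≤ ∏ p ∈ S with p.Prime, (1 - (√p)⁻¹)⁻¹ := by
  classical
  have hprime {p : ℕ} (hp : p.Prime) : ‖invSqrtHom p‖ < 1 := by
    have : (1 : ℝ) < √p := Real.lt_sqrt_of_sq_lt (by norm_cast; nlinarith [hp.two_le])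
    simp only [invSqrtHom, MonoidHom.coe_mk, OneHom.coe_mk, norm_inv, Real.norm_eq_abs,
      abs_of_nonneg (Real.sqrt_nonneg _)]
    exact inv_lt_one_of_one_lt₀ this
  have hsum := (EulerProduct.summable_and_hasSum_factoredNumbers_prod_filter_prime_geometric
    hprime S).2
  rw [← Finset.sum_subtype_of_mem _ (p := (· ∈ Nat.factoredNumbers S)) hT]
  exact sum_le_hasSum _ (fun x _ ↦ inv_nonneg.mpr (Real.sqrt_nonneg _)) hsum

lemma inv_one_sub_le_exp {r : ℝ} (hr0 : 0 ≤ r) (hr : r ≤ 3 / 4) : (1 - r)⁻¹ ≤ exp (4 * r) := by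
  rw [inv_le_iff_one_le_mul₀ (by linarith)]
  nlinarith [add_one_le_exp (4 * r)]

lemma sum_inv_sqrt_le_two_mul_sqrt_card (S : Finset ℕ) (hS : 0 ∉ S) :
    ∑ q ∈ S, (√q)⁻¹ ≤ 2 * √(#S) := by
  induction S using Finset.induction_on_max with
  | empty => simp
  | insert a s hlt ih =>
    have has : a ∉ s := fun h ↦ lt_irrefl a (hlt a h)
    have hcard : #s + 1 ≤ a := by
      have ha : a ≠ 0 := fun h ↦ hS (h ▸ Finset.mem_insert_self a s)
      have hsub : s ⊆ Finset.Ico 1 a := fun x hx ↦ Finset.mem_Ico.mpr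
        ⟨Nat.pos_of_ne_zero fun h ↦ hS (h ▸ Finset.mem_insert_of_mem hx), hlt x hx⟩
      have := Finset.card_le_card hsub
      rw [Nat.card_Ico] at this
      omega
    rw [Finset.sum_insert has, Finset.card_insert_of_notMem has]
    have ih := ih fun h ↦ hS (Finset.mem_insert_of_mem h)
    set k : ℝ := (s.card : ℝ) with hk_def
    have hk : 0 ≤ k := Nat.cast_nonneg _
    have hka : √(k + 1) ≤ √a := Real.sqrt_le_sqrt (by rw [hk_def]; exact_mod_cast hcard)
    have hpos : 0 < √(k + 1) := Real.sqrt_pos.mpr (by positivity)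
    have hstep : (√(k + 1))⁻¹ ≤ 2 * √(k + 1) - 2 * √k := by
      rw [inv_le_iff_one_le_mul₀ hpos]
      nlinarith [Real.sq_sqrt hk, Real.sq_sqrt (by positivity : 0 ≤ k + 1),
        sq_nonneg (√(k + 1) - √k)]
    push_cast
    linarith [inv_anti₀ hpos hka]

lemma inv_sqrt_le_three_quarters {p : ℕ} (hp : 2 ≤ p) : (√p)⁻¹ ≤ 3 / 4 := by
  have : (2 : ℝ) ≤ p := by exact_mod_cast hp
  rw [inv_le_comm₀ (Real.sqrt_pos.mpr (by positivity)) (by norm_num)]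
  exact Real.le_sqrt_of_sq_le (by linarith)

lemma card_le_sqrt_mul_exp_of_subset_factoredNumbers {S T : Finset ℕ} {X : ℕ}
    (hT : ↑T ⊆ Nat.factoredNumbers S) (hX : ∀ x ∈ T, x ≤ X) :
    (#T : ℝ) ≤ √X * exp (8 * √(#S)) := by
  have hterm : ∀ x ∈ T, (1 : ℝ) ≤ √X * (√x)⁻¹ := fun x hx ↦ by
    have hx0 : (0 : ℝ) < x := by exact_mod_cast Nat.pos_of_ne_zero (hT hx).1
    rw [← div_eq_mul_inv, one_le_div (Real.sqrt_pos.mpr hx0)]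
    exact Real.sqrt_le_sqrt (by exact_mod_cast hX x hx)
  have hsum : ∑ p ∈ S with p.Prime, (√p)⁻¹ ≤ 2 * √(#S) := calc
    _ ≤ 2 * √(#{p ∈ S | p.Prime}) :=
      sum_inv_sqrt_le_two_mul_sqrt_card _ fun h ↦ Nat.not_prime_zero (Finset.mem_filter.mp h).2
    _ ≤ 2 * √(#S) := by gcongr; exact Finset.filter_subset _ _
  have hprod : ∏ p ∈ S with p.Prime, (1 - (√p)⁻¹)⁻¹ ≤ exp (8 * √(#S)) := calc
    _ ≤ ∏ p ∈ S with p.Prime, exp (4 * (√p)⁻¹) := by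
      refine Finset.prod_le_prod (fun p hp ↦ ?_) fun p hp ↦ ?_
      · have := inv_sqrt_le_three_quarters (Finset.mem_filter.mp hp).2.two_le
        exact inv_nonneg.mpr (by linarith)
      · exact inv_one_sub_le_exp (by positivity)
          (inv_sqrt_le_three_quarters (Finset.mem_filter.mp hp).2.two_le)
    _ = exp (4 * ∑ p ∈ S with p.Prime, (√p)⁻¹) := by rw [Finset.mul_sum, Real.exp_sum]
    _ ≤ exp (8 * √(#S)) := exp_le_exp.mpr (by linarith)
  calc (#T : ℝ) = ∑ _x ∈ T, 1 := by simp
    _ ≤ ∑ x ∈ T, √X * (√x)⁻¹ := Finset.sum_le_sum hterm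
    _ = √X * ∑ x ∈ T, (√x)⁻¹ := (Finset.mul_sum ..).symm
    _ ≤ √X * exp (8 * √(#S)) := by
      gcongr
      exact (sum_inv_sqrt_le_prod_of_subset_factoredNumbers hT).trans hprod

lemma card_le_sqrt_mul_exp_card_primeFactors_prod_mirror {g N : ℕ} (hg : 2 ≤ g) {F : Finset ℕ}
    (hF : ∀ s ∈ F, ¬ g ∣ s ∧ s < g ^ N) :
    (#F : ℝ) ≤ √(g ^ N : ℕ) * exp (8 * √(#(∏ s ∈ F, mirror g s).primeFactors)) := by
  have hprod : ∏ s ∈ F, mirror g s ≠ 0 :=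
    Finset.prod_ne_zero_iff.mpr fun s hs ↦ mirror_ne_zero hg (hF s hs).1
  have hcard : #(F.image (mirror g)) = #F :=
    Finset.card_image_of_injOn fun a ha b hb ↦ mirror_injOn hg (hF a ha).1 (hF b hb).1
  rw [← hcard]
  refine card_le_sqrt_mul_exp_of_subset_factoredNumbers (fun x hx ↦ ?_) fun x hx ↦ ?_
  · obtain ⟨s, hs, rfl⟩ := Finset.mem_image.mp hx
    exact Nat.mem_factoredNumbers_of_primeFactors_subset (mirror_ne_zero hg (hF s hs).1)
      (Nat.primeFactors_mono (Finset.dvd_prod_of_mem _ hs) hprod)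
  · obtain ⟨s, hs, rfl⟩ := Finset.mem_image.mp hx
    exact (mirror_lt_pow hg (hF s hs).2).le

lemma prod_range_pow_factorization_centralBinom_le (n : ℕ) :
    ∏ p ∈ range (2 * n / 3 + 1), p ^ (Nat.centralBinom n).factorization p ≤
      (2 * n) ^ Nat.sqrt (2 * n) * 4 ^ (2 * n / 3) := by
  rcases Nat.eq_zero_or_pos n with rfl | hn
  · simp
  set f : ℕ → ℕ := fun p ↦ p ^ (Nat.centralBinom n).factorization p
  set P := {p ∈ range (2 * n / 3 + 1) | p.Prime}
  have hsmall : ∏ p ∈ P with p ≤ Nat.sqrt (2 * n), f p ≤ (2 * n) ^ Nat.sqrt (2 * n) := calc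
    _ ≤ (2 * n) ^ #{p ∈ P | p ≤ Nat.sqrt (2 * n)} :=
      Finset.prod_le_pow_card _ _ _ fun p _ ↦ Nat.pow_factorization_choose_le (by omega)
    _ ≤ (2 * n) ^ Nat.sqrt (2 * n) := by
      refine Nat.pow_le_pow_right (by omega) ((Finset.card_le_card fun p hp ↦ ?_).trans
        (Nat.card_Icc 1 _).le)
      simp only [Finset.mem_filter, P] at hp
      exact Finset.mem_Icc.mpr ⟨hp.1.2.one_lt.le, hp.2⟩
  have hlarge : ∏ p ∈ P with ¬p ≤ Nat.sqrt (2 * n), f p ≤ 4 ^ (2 * n / 3) := calc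
    _ ≤ ∏ p ∈ P with ¬p ≤ Nat.sqrt (2 * n), p := Finset.prod_le_prod' fun p hp ↦ by
      simp only [Finset.mem_filter, not_le, P] at hp
      exact (Nat.pow_le_pow_right hp.1.2.pos
        (Nat.factorization_choose_le_one (Nat.sqrt_lt'.mp hp.2))).trans (pow_one p).le
    _ ≤ ∏ p ∈ P, p := Finset.prod_le_prod_of_subset_of_one_le' (Finset.filter_subset _ _)
      fun p hp _ ↦ (Finset.mem_filter.mp hp).2.one_lt.le
    _ ≤ 4 ^ (2 * n / 3) := primorial_le_four_pow _
  rw [← Finset.prod_filter_of_ne (p := Nat.Prime) fun p _ h ↦ ?_,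
    ← Finset.prod_filter_mul_prod_filter_not P (· ≤ Nat.sqrt (2 * n))]
  · exact Nat.mul_le_mul hsmall hlarge
  · contrapose h
    rw [Nat.factorization_eq_zero_of_not_prime _ h, pow_zero]

lemma prod_Ioc_pow_factorization_centralBinom_le (n : ℕ) :
    ∏ p ∈ Ioc n (2 * n), p ^ (Nat.centralBinom n).factorization p ≤
      (2 * n) ^ #{p ∈ Ioc n (2 * n) | p.Prime} := by
  rw [← Finset.prod_filter_of_ne (p := Nat.Prime) fun p _ h ↦ ?_]
  · refine Finset.prod_le_pow_card _ _ _ fun p hp ↦ Nat.pow_factorization_choose_le ?_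
    simp only [Finset.mem_filter, Finset.mem_Ioc] at hp
    omega
  · contrapose h
    rw [Nat.factorization_eq_zero_of_not_prime _ h, pow_zero]

lemma centralBinom_le_pow_card_primes_Ioc {n : ℕ} (hn : 2 < n) :
    Nat.centralBinom n ≤ (2 * n) ^ Nat.sqrt (2 * n) * 4 ^ (2 * n / 3) *
      (2 * n) ^ #{p ∈ Ioc n (2 * n) | p.Prime} := by
  have hsplit : ∏ p ∈ range (2 * n + 1), p ^ (Nat.centralBinom n).factorization p =
      ∏ p ∈ range (2 * n / 3 + 1) ∪ Ioc n (2 * n), p ^ (Nat.centralBinom n).factorization p := by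
    refine (Finset.prod_subset (fun p hp ↦ ?_) fun p hp hp' ↦ ?_).symm
    · simp only [Finset.mem_union, Finset.mem_range, Finset.mem_Ioc] at hp ⊢
      omega
    · simp only [Finset.mem_union, Finset.mem_range, Finset.mem_Ioc, not_or, not_and,
        not_le] at hp hp'
      by_cases hprime : p.Prime
      · rw [Nat.factorization_centralBinom_of_two_mul_self_lt_three_mul hn (by omega) (by omega),
          pow_zero]
      · rw [Nat.factorization_eq_zero_of_not_prime _ hprime, pow_zero]
  rw [← Nat.prod_pow_factorization_centralBinom, hsplit, Finset.prod_union]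
  · exact Nat.mul_le_mul (prod_range_pow_factorization_centralBinom_le n)
      (prod_Ioc_pow_factorization_centralBinom_le n)
  · refine Finset.disjoint_left.mpr fun p hp hp' ↦ ?_
    simp only [Finset.mem_range, Finset.mem_Ioc] at hp hp'
    omega

lemma four_pow_le_pow_card_primes_Ioc {n : ℕ} (hn : 2 < n) :
    4 ^ n ≤ (2 * n) ^ (Nat.sqrt (2 * n) + 1 + #{p ∈ Ioc n (2 * n) | p.Prime}) * 4 ^ (2 * n / 3) :=
  calc 4 ^ n ≤ 2 * n * Nat.centralBinom n :=
        Nat.four_pow_le_two_mul_self_mul_centralBinom n (by omega)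
    _ ≤ 2 * n * ((2 * n) ^ Nat.sqrt (2 * n) * 4 ^ (2 * n / 3) *
          (2 * n) ^ #{p ∈ Ioc n (2 * n) | p.Prime}) :=
        Nat.mul_le_mul_left _ (centralBinom_le_pow_card_primes_Ioc hn)
    _ = _ := by ring

lemma rpow_two_thirds_le_card_primes_Ioc {n : ℕ} (hn : 2 ^ 29 ≤ n) :
    (n : ℝ) ^ (2 / 3 : ℝ) ≤ #{p ∈ Ioc n (2 * n) | p.Prime} := by
  set k := #{p ∈ Ioc n (2 * n) | p.Prime}
  set s := Nat.sqrt (2 * n)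
  set L := log (2 * n)
  set u := (2 * n : ℝ) ^ (1 / 6 : ℝ)
  have hm : (0 : ℝ) < 2 * n := by positivity
  -- with `u = (2n)^(1/6)` every quantity below is bounded by a power of `u`
  have hu6 : u ^ 6 = 2 * n := by
    rw [← Real.rpow_natCast, ← Real.rpow_mul hm.le]; norm_num
  have hlog : n * log 4 ≤ (s + 1 + k) * L + 2 * n / 3 * log 4 := by
    have h := Real.log_le_log (by positivity)
      (by exact_mod_cast four_pow_le_pow_card_primes_Ioc (by omega) :
        (4 : ℝ) ^ n ≤ (2 * n : ℝ) ^ (s + 1 + k) * 4 ^ (2 * n / 3))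
    rw [Real.log_mul (by positivity) (by positivity), Real.log_pow, Real.log_pow,
      Real.log_pow] at h
    have hj : ((2 * n / 3 : ℕ) : ℝ) ≤ 2 * n / 3 := by exact_mod_cast Nat.cast_div_le
    push_cast at h
    nlinarith [Real.log_pos (by norm_num : (1 : ℝ) < 4)]
  have hn' : (2 : ℝ) ^ 29 ≤ n := by exact_mod_cast hn
  have hu : 30 ≤ u := by
    refine le_of_pow_le_pow_left₀ (by norm_num : 6 ≠ 0) (by positivity) ?_
    rw [hu6]
    linarith
  have hL : 0 < L := Real.log_pos (by linarith)
  have hL6 : L ≤ 6 * u := by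
    have := Real.log_le_rpow_div hm.le (by norm_num : (0 : ℝ) < 1 / 6)
    linarith [show u / (1 / 6) = 6 * u by ring]
  have hs : (s : ℝ) ≤ u ^ 3 := by
    refine le_of_pow_le_pow_left₀ (by norm_num : 2 ≠ 0) (by positivity) ?_
    rw [← pow_mul, hu6]
    exact_mod_cast Nat.sqrt_le' (2 * n)
  have hn23 : (n : ℝ) ^ (2 / 3 : ℝ) ≤ u ^ 4 := by
    rw [← Real.rpow_natCast, ← Real.rpow_mul hm.le]
    norm_num
    exact Real.rpow_le_rpow (by positivity) (by linarith) (by norm_num)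
  have hlog4 : 1.38 ≤ log 4 := by
    rw [show (4 : ℝ) = 2 ^ 2 by norm_num, Real.log_pow]
    linarith [Real.log_two_gt_d9]
  have key : (n : ℝ) ^ (2 / 3 : ℝ) * L ≤ k * L := calc
    _ ≤ u ^ 4 * (6 * u) := mul_le_mul hn23 hL6 hL.le (by positivity)
    _ ≤ n * log 4 / 3 - (u ^ 3 + 1) * (6 * u) := by
      have h6 : 30 * u ^ 5 ≤ u ^ 6 := by nlinarith [pow_nonneg (by linarith : 0 ≤ u) 5]
      have h5 : 30 * u ^ 4 ≤ u ^ 5 := by nlinarith [pow_nonneg (by linarith : 0 ≤ u) 4]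
      have h4 : u ≤ u ^ 4 := by nlinarith [pow_le_pow_left₀ (by norm_num) hu 3]
      nlinarith
    _ ≤ n * log 4 / 3 - (s + 1) * L := by
      nlinarith [mul_le_mul (by linarith : (s : ℝ) + 1 ≤ u ^ 3 + 1) hL6 hL.le (by positivity)]
    _ ≤ k * L := by linarith
  exact le_of_mul_le_mul_right key hL

lemma not_dvd_of_prime_of_lt {g p : ℕ} (hg : 2 ≤ g) (hp : p.Prime) (hgp : g < p) : ¬ g ∣ p :=
  fun h ↦ by rcases hp.eq_one_or_self_of_dvd g h with h | h <;> omega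

lemma sq_div_le_card_primeFactors_prod_mirror {g N : ℕ} (hg : 2 ≤ g) (hN : 30 ≤ N) :
    (N : ℝ) ^ 2 / 10 ^ 4 ≤ ((∏ p ∈ (Finset.Icc (g ^ (N - 1)) (g ^ N - 1)).filter Nat.Prime,
      mirror g p).primeFactors.card : ℝ) := by
  set n := g ^ (N - 1)
  set F := (Finset.Icc n (g ^ N - 1)).filter Nat.Prime
  set k := (∏ p ∈ F, mirror g p).primeFactors.card
  have hgN : g ^ N = g * n := by rw [← pow_succ']; congr; omega
  have hgn : g < n := by
    simpa using Nat.pow_lt_pow_right (by omega : 1 < g) (by omega : 1 < N - 1)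
  have hn : 2 ^ 29 ≤ n :=
    (Nat.pow_le_pow_right (by norm_num) (by omega)).trans (Nat.pow_le_pow_left hg _)
  have hsub : {p ∈ Ioc n (2 * n) | p.Prime} ⊆ F := fun p hp ↦ by
    simp only [Finset.mem_filter, Finset.mem_Ioc, Finset.mem_Icc, F] at hp ⊢
    have hpgN : p ≠ g ^ N := fun h ↦
      not_dvd_of_prime_of_lt hg hp.2 (by omega) (h ▸ hgN ▸ dvd_mul_right g n)
    have : 2 * n ≤ g ^ N := hgN ▸ Nat.mul_le_mul_right n hg
    exact ⟨⟨by omega, by omega⟩, hp.2⟩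
  have hF : ∀ p ∈ F, ¬ g ∣ p ∧ p < g ^ N := fun p hp ↦ by
    simp only [Finset.mem_filter, Finset.mem_Icc, F] at hp
    exact ⟨not_dvd_of_prime_of_lt hg hp.2 (by omega), by omega⟩
  have hcount : (n : ℝ) ^ (2 / 3 : ℝ) ≤ √(g ^ N : ℕ) * exp (8 * √k) :=
    calc (n : ℝ) ^ (2 / 3 : ℝ) ≤ #{p ∈ Ioc n (2 * n) | p.Prime} :=
          rpow_two_thirds_le_card_primes_Ioc hn
      _ ≤ #F := by exact_mod_cast Finset.card_le_card hsub
      _ ≤ _ := card_le_sqrt_mul_exp_card_primeFactors_prod_mirror hg hF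
  have hlog := Real.log_le_log (by positivity) hcount
  rw [Real.log_rpow (by positivity), Real.log_mul (by positivity) (by positivity),
    Real.log_sqrt (by positivity), Real.log_exp] at hlog
  push_cast [n] at hlog
  rw [Real.log_pow, Real.log_pow, Nat.cast_sub (by omega), Nat.cast_one] at hlog
  have hlogg : 0.69 ≤ log g := (Real.log_two_gt_d9.le.trans' (by norm_num)).trans
    (Real.log_le_log (by norm_num) (by exact_mod_cast hg))
  have hNR : (30 : ℝ) ≤ N := by exact_mod_cast hN
  have hsqrt : (N : ℝ) / 100 ≤ √k := by
    nlinarith [mul_le_mul_of_nonneg_left hlogg (by linarith : (0 : ℝ) ≤ N / 6 - 2 / 3)]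
  calc (N : ℝ) ^ 2 / 10 ^ 4 = (N / 100) ^ 2 := by ring
    _ ≤ √k ^ 2 := pow_le_pow_left₀ (by positivity) hsqrt 2
    _ = k := Real.sq_sqrt (by positivity)

theorem stmt_10 (g : ℕ) (hg : 2 ≤ g) :
    ∃ c : ℝ, 0 < c ∧ ∃ N₀ : ℕ, ∀ N : ℕ, N₀ ≤ N →
      c * (N : ℝ) ^ 2 / (Real.log N) ^ 2 ≤
        ((∏ p ∈ (Finset.Icc (g ^ (N - 1)) (g ^ N - 1)).filter Nat.Prime,
          mirror g p).primeFactors.card : ℝ) := by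
  refine ⟨1 / 10 ^ 4, by norm_num, 30, fun N hN ↦ ?_⟩
  have hlogN : 1 ≤ log N := by
    have : (3 : ℝ) ≤ N := by exact_mod_cast (by omega : 3 ≤ N)
    rw [Real.le_log_iff_exp_le (by positivity)]
    linarith [Real.exp_one_lt_d9]
  calc 1 / 10 ^ 4 * (N : ℝ) ^ 2 / log N ^ 2 ≤ (N : ℝ) ^ 2 / 10 ^ 4 := by
        rw [div_le_iff₀ (by positivity)]
        nlinarith [one_le_pow₀ (n := 2) hlogN, sq_nonneg (N : ℝ)]
    _ ≤ _ := sq_div_le_card_primeFactors_prod_mirror hg hN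
end
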